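/- Let g : ℝ → ℝ be continuous and suppose either g(0) < 0, or g(0) = 0 and g has strictly negative derivative at 0. If no t' > 0 is an upward zero-crossing of g, then g(t) ≤ 0 for all t ≥ 0. -/

import Mathlib

/-!
If `g t > 0` for some `t ≥ 0`, then `g` is negative at some `x ∈ [0, t)`: at `0` itself, or just
after `0` because of the negative derivative. On `[x, t]`, the infimum `z` of the points where
`g > 0` and the supremum `a` of the points of `[x, z]` where `g < 0` enclose a plateau `[a, z]`
of zeros of `g`, and this plateau makes `z > 0` an upward zero-crossing.
-/

/-- `z` is an upward (negative-to-positive) zero-crossing of `f`. -/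
def IsUpCrossing (f : ℝ → ℝ) (z : ℝ) : Prop :=
  ∃ a : ℝ, a ≤ z ∧
    (∀ t ∈ Set.Icc a z, f t = 0) ∧
    (∀ ε > 0, ∃ t ∈ Set.Ico (a - ε) a, f t < 0) ∧
    (∀ ε > 0, ∃ t ∈ Set.Ioc z (z + ε), f t > 0)

open Set Filter Topology

theorem HasDerivAt.eventually_nhdsGT_lt_of_neg {f : ℝ → ℝ} {f' x : ℝ} (hf : HasDerivAt f f' x)
    (hf' : f' < 0) : ∀ᶠ y in 𝓝[>] x, f y < f x := by
  filter_upwards [hf.hasDerivWithinAt.limsup_slope_le' (s := Ioi x) (lt_irrefl x) hf',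
    self_mem_nhdsWithin] with y hslope hxy
  exact (slope_neg_iff_of_le hxy.le).1 hslope

section Crossing

variable {g : ℝ → ℝ}

theorem exists_zero_nonpos_Icc_frequently_pos (hg : Continuous g) {x s : ℝ} (hxs : x ≤ s)
    (hgx : g x < 0) (hgs : 0 < g s) :
    ∃ z ∈ Ioc x s, g z = 0 ∧ (∀ t ∈ Icc x z, g t ≤ 0) ∧
      ∀ ε > 0, ∃ t ∈ Ioc z (z + ε), 0 < g t := by
  set P := {u ∈ Icc x s | 0 < g u}
  have hPne : P.Nonempty := ⟨s, ⟨hxs, le_rfl⟩, hgs⟩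
  have hPbdd : BddBelow P := ⟨x, fun u hu => hu.1.1⟩
  have hxz : x ≤ sInf P := le_csInf hPne fun u hu => hu.1.1
  have hzs : sInf P ≤ s := csInf_le hPbdd ⟨⟨hxs, le_rfl⟩, hgs⟩
  have hgz_nonneg : 0 ≤ g (sInf P) :=
    closure_minimal (fun u hu => hu.2.le) (isClosed_le continuous_const hg)
      (csInf_mem_closure hPne hPbdd)
  have hxz' : x < sInf P := hxz.lt_of_ne fun h => by rw [← h] at hgz_nonneg; linarith
  have hnonpos : ∀ t ∈ Ico x (sInf P), g t ≤ 0 := fun t ht =>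
    not_lt.1 fun hpos => (csInf_le hPbdd ⟨⟨ht.1, ht.2.le.trans hzs⟩, hpos⟩).not_gt ht.2
  have hnonpos' : ∀ t ∈ Icc x (sInf P), g t ≤ 0 := by
    intro t ht
    rw [← closure_Ico hxz'.ne] at ht
    exact closure_minimal hnonpos (isClosed_le hg continuous_const) ht
  have hgz : g (sInf P) = 0 := le_antisymm (hnonpos' _ ⟨hxz, le_rfl⟩) hgz_nonneg
  refine ⟨sInf P, ⟨hxz', hzs⟩, hgz, hnonpos', fun ε hε => ?_⟩
  obtain ⟨u, huP, hu⟩ := exists_lt_of_csInf_lt hPne (lt_add_of_pos_right _ hε)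
  refine ⟨u, ⟨(csInf_le hPbdd huP).lt_of_ne ?_, hu.le⟩, huP.2⟩
  rintro rfl
  linarith [huP.2]

theorem exists_zero_Icc_frequently_neg (hg : Continuous g) {x z : ℝ} (hxz : x ≤ z)
    (hgx : g x < 0) (hgz : g z = 0) (hle : ∀ t ∈ Icc x z, g t ≤ 0) :
    ∃ a ≤ z, (∀ t ∈ Icc a z, g t = 0) ∧ ∀ ε > 0, ∃ t ∈ Ico (a - ε) a, g t < 0 := by
  set S := {u ∈ Icc x z | g u < 0}
  have hSne : S.Nonempty := ⟨x, ⟨le_rfl, hxz⟩, hgx⟩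
  have hSbdd : BddAbove S := ⟨z, fun u hu => hu.1.2⟩
  have hxa : x ≤ sSup S := le_csSup hSbdd ⟨⟨le_rfl, hxz⟩, hgx⟩
  have haz : sSup S ≤ z := csSup_le hSne fun u hu => hu.1.2
  have hzero : ∀ t ∈ Ioc (sSup S) z, g t = 0 := fun t ht =>
    le_antisymm (hle t ⟨hxa.trans ht.1.le, ht.2⟩) <| not_lt.1 fun hneg =>
      (le_csSup hSbdd ⟨⟨hxa.trans ht.1.le, ht.2⟩, hneg⟩).not_gt ht.1
  have hga : g (sSup S) = 0 := by
    rcases haz.lt_or_eq with h | h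
    · refine closure_minimal hzero (isClosed_eq hg continuous_const) ?_
      rw [closure_Ioc h.ne]
      exact ⟨le_rfl, haz⟩
    · rwa [h]
  refine ⟨sSup S, haz, fun t ht => ?_, fun ε hε => ?_⟩
  · rcases ht.1.lt_or_eq with h | h
    · exact hzero t ⟨h, ht.2⟩
    · rwa [← h]
  · obtain ⟨u, huS, hu⟩ := exists_lt_of_lt_csSup hSne (sub_lt_self _ hε)
    refine ⟨u, ⟨hu.le, (le_csSup hSbdd huS).lt_of_ne ?_⟩, huS.2⟩
    rintro rfl
    linarith [huS.2]

theorem exists_isUpCrossing_mem_Ioc (hg : Continuous g) {x s : ℝ} (hxs : x ≤ s)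
    (hgx : g x < 0) (hgs : 0 < g s) : ∃ z ∈ Ioc x s, IsUpCrossing g z := by
  obtain ⟨z, hz, hgz, hle, hright⟩ := exists_zero_nonpos_Icc_frequently_pos hg hxs hgx hgs
  obtain ⟨a, haz, hzero, hleft⟩ := exists_zero_Icc_frequently_neg hg hz.1.le hgx hgz hle
  exact ⟨z, hz, a, haz, hzero, hleft, hright⟩

end Crossing

theorem stmt_13 (g : ℝ → ℝ) (hg : Continuous g)
    (hactive : g 0 < 0 ∨ (g 0 = 0 ∧ ∃ d < (0 : ℝ), HasDerivAt g d 0))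
    (hnoZC : ∀ t' > (0 : ℝ), ¬ IsUpCrossing g t') :
    ∀ t ≥ (0 : ℝ), g t ≤ 0 := by
  intro t ht
  by_contra! hgt
  have hg0 : g 0 ≤ 0 := by rcases hactive with h | ⟨h, -⟩ <;> linarith
  have ht0 : 0 < t := ht.lt_of_ne (by rintro rfl; linarith)
  have hneg : ∃ x ∈ Ico 0 t, g x < 0 := by
    rcases hactive with h0 | ⟨h0, d, hd, hderiv⟩
    · exact ⟨0, ⟨le_rfl, ht0⟩, h0⟩
    · obtain ⟨x, hx, hxt⟩ :=
        ((hderiv.eventually_nhdsGT_lt_of_neg hd).and (Ioo_mem_nhdsGT ht0)).exists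
      exact ⟨x, ⟨hxt.1.le, hxt.2⟩, h0 ▸ hx⟩
  obtain ⟨x, hx, hgx⟩ := hneg
  obtain ⟨z, hz, hcross⟩ := exists_isUpCrossing_mem_Ioc hg hx.2.le hgx hgt
  exact hnoZC z (hx.1.trans_lt hz.1) hcross
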